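/- arXiv:1611.04005 — 6 statements merged into one kernel-verified Lean document; each statement's English description precedes it below -/
import Mathlib

section
/- Let N → L₁ ⊕ L₂ → M → N⟦1⟧ be a distinguished triangle whose first morphism has components (f₁, f₂) with f₂ = 0 (i.e. the morphism N → L₁ ⊕ L₂ is (f₁, 0)). Then there exist an object M′ and morphisms g′ : L₁ → M′, h′ : M′ → N⟦1⟧ such that N →f₁ L₁ →g′ M′ →h′ N⟦1⟧ is a distinguished triangle and the given triangle is isomorphic (as a triangle) to the direct sum of this triangle with the contractible triangle 0 → L₂ →𝟙 L₂ → 0. In particular M ≅ M′ ⊕ L₂. -/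
/-!
Complete `f₁` to a distinguished triangle `N → L₁ → M' → N⟦1⟧`. Its direct sum with the
contractible triangle `0 → L₂ → L₂ → 0` is distinguished, being a product of distinguished
triangles, and its first morphism is `(f₁, 0)`, as for the given triangle. Two distinguished
triangles on the same first morphism are isomorphic.
-/

open CategoryTheory CategoryTheory.Limits CategoryTheory.Pretriangulated

universe v u

namespace CategoryTheory.Pretriangulated

variable {C : Type u} [Category.{v} C] [Preadditive C] [HasZeroObject C] [HasShift C ℤ]
  [∀ n : ℤ, (CategoryTheory.shiftFunctor C n).Additive] [Pretriangulated C]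

lemma distinguished_of_isLimit_binaryFan {T₁ T₂ : Triangle C} (c : BinaryFan T₁ T₂)
    (hc : IsLimit c) (h₁ : T₁ ∈ distTriang C) (h₂ : T₂ ∈ distTriang C) :
    c.pt ∈ distTriang C :=
  isomorphic_distinguished _
    (productTriangle_distinguished _ (fun j => by cases j <;> assumption)) _
    (hc.conePointUniqueUpToIso (productTriangle.isLimitFan _))

/- The triangles below are reducible structure literals rather than `Triangle.mk`s: otherwise
their objects do not unfold at reducible transparency and `simp` cannot rewrite morphisms
between them. -/
noncomputable abbrev Triangle.biprodContractible (T : Triangle C) (X : C) : Triangle C where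
  obj₁ := T.obj₁
  obj₂ := T.obj₂ ⊞ X
  obj₃ := T.obj₃ ⊞ X
  mor₁ := biprod.lift T.mor₁ 0
  mor₂ := biprod.map T.mor₂ (𝟙 X)
  mor₃ := biprod.fst ≫ T.mor₃

open ZeroObject in
noncomputable abbrev Triangle.biprodContractibleBicone (T : Triangle C) (X : C) :
    BinaryBicone T { obj₁ := 0, obj₂ := X, obj₃ := X, mor₁ := 0, mor₂ := 𝟙 X, mor₃ := 0 } where
  pt := T.biprodContractible X
  fst := Triangle.homMk _ _ (𝟙 T.obj₁) biprod.fst biprod.fst (by simp) (by simp) (by simp)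
  snd := Triangle.homMk _ _ 0 biprod.snd biprod.snd (by simp) (by simp) (by simp)
  inl := Triangle.homMk _ _ (𝟙 T.obj₁) biprod.inl biprod.inl (by ext <;> simp) (by simp) (by simp)
  inr := Triangle.homMk _ _ 0 biprod.inr biprod.inr (by simp) (by simp) (by simp)
  inl_fst := by ext <;> simp
  inl_snd := by ext <;> simp
  inr_fst := by ext <;> simp
  inr_snd := by ext <;> simp

lemma Triangle.biprodContractible_distinguished (T : Triangle C) (hT : T ∈ distTriang C)
    (X : C) : T.biprodContractible X ∈ distTriang C :=
  distinguished_of_isLimit_binaryFan _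
    (isBinaryBilimitOfTotal (T.biprodContractibleBicone X) (by ext <;> simp)).isLimit
    hT (contractible_distinguished₁ X)

end CategoryTheory.Pretriangulated

/-- If `N → L₁ ⊞ L₂ → M → N⟦1⟧` is a distinguished triangle whose first
morphism is `(f₁, 0)`, then there is a distinguished triangle `N → L₁ → M′ → N⟦1⟧`
such that the given triangle is isomorphic to the direct sum of this triangle with the
contractible triangle `0 → L₂ → L₂ → 0`; in particular `M ≅ M′ ⊞ L₂`. -/
theorem stmt0 {C : Type*} [Category C] [Preadditive C] [HasZeroObject C]
    [HasShift C ℤ] [∀ n : ℤ, (shiftFunctor C n).Additive] [Pretriangulated C]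
    [HasBinaryBiproducts C]
    (N L₁ L₂ M : C) (f₁ : N ⟶ L₁) (g : L₁ ⊞ L₂ ⟶ M) (h : M ⟶ N⟦(1 : ℤ)⟧)
    (hT : Triangle.mk (biprod.lift f₁ 0) g h ∈ distTriang C) :
    ∃ (M' : C) (g' : L₁ ⟶ M') (h' : M' ⟶ N⟦(1 : ℤ)⟧),
      (Triangle.mk f₁ g' h' ∈ distTriang C) ∧
      Nonempty ((Triangle.mk (biprod.lift f₁ 0) g h : Triangle C) ≅
        Triangle.mk (biprod.lift f₁ (0 : N ⟶ L₂))
          (biprod.map g' (𝟙 L₂)) (biprod.fst ≫ h')) ∧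
      Nonempty (M ≅ M' ⊞ L₂) := by
  obtain ⟨M', g', h', hT₁⟩ := distinguished_cocone_triangle f₁
  let e := isoTriangleOfIso₁₂ _ _ hT
    ((Triangle.mk f₁ g' h').biprodContractible_distinguished hT₁ L₂)
    (Iso.refl _) (Iso.refl _) ((Category.comp_id _).trans (Category.id_comp _).symm)
  exact ⟨M', g', h', hT₁, ⟨e⟩, ⟨Triangle.π₃.mapIso e⟩⟩
end

section
/- Let N → L₁ ⊕ L₂ →g M → N⟦1⟧ be a distinguished triangle such that the component g₂ = ι₂ ≫ g : L₂ → M of the second morphism is zero. Then there exist an object N′ and morphisms f′ : N′ → L₁, h′ : M → N′⟦1⟧ such that N′ →f′ L₁ → M →h′ N′⟦1⟧ is a distinguished triangle and the given triangle is isomorphic (as a triangle) to the direct sum of this triangle with the contractible triangle L₂ →𝟙 L₂ → 0 → L₂⟦1⟧. In particular N ≅ N′ ⊕ L₂. -/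
/-!
Complete `biprod.inl ≫ g : L₁ ⟶ M` to a distinguished triangle `N' → L₁ → M → N'⟦1⟧` and add
the contractible triangle on `L₂`. The sum is distinguished, and since `biprod.inr ≫ g = 0` its
second morphism `biprod.desc (biprod.inl ≫ g) 0` is `g` itself. Two distinguished triangles with
the same second morphism are isomorphic, which gives the isomorphism of triangles and, on first
objects, `N ≅ N' ⊞ L₂`.
-/

open CategoryTheory CategoryTheory.Limits CategoryTheory.Pretriangulated

namespace CategoryTheory.Limits

noncomputable def biprod.isoPi {C : Type*} [Category C] [HasZeroMorphisms C]
    (f : WalkingPair → C) [HasBinaryBiproduct (f .left) (f .right)] [HasProduct f] :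
    f .left ⊞ f .right ≅ ∏ᶜ f where
  hom := Pi.lift fun j => WalkingPair.casesOn j biprod.fst biprod.snd
  inv := biprod.lift (Pi.π f .left) (Pi.π f .right)
  hom_inv_id := by ext <;> simp
  inv_hom_id := by ext (_ | _) <;> simp

end CategoryTheory.Limits

namespace CategoryTheory.Pretriangulated

open ZeroObject

noncomputable def biprodTriangle {C : Type*} [Category C] [HasZeroMorphisms C] [HasShift C ℤ]
    [HasBinaryBiproducts C] (T₁ T₂ : Triangle C) : Triangle C :=
  Triangle.mk (biprod.map T₁.mor₁ T₂.mor₁) (biprod.map T₁.mor₂ T₂.mor₂)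
    (biprod.desc (T₁.mor₃ ≫ biprod.inl⟦(1 : ℤ)⟧') (T₂.mor₃ ≫ biprod.inr⟦(1 : ℤ)⟧'))

variable {C : Type*} [Category C] [Preadditive C] [HasZeroObject C] [HasShift C ℤ]
  [∀ n : ℤ, (shiftFunctor C n).Additive] [Pretriangulated C]

noncomputable def isoTriangleOfIso₂₃ (T₁ T₂ : Triangle C) (hT₁ : T₁ ∈ distTriang C)
    (hT₂ : T₂ ∈ distTriang C) (e₂ : T₁.obj₂ ≅ T₂.obj₂) (e₃ : T₁.obj₃ ≅ T₂.obj₃)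
    (comm : T₁.mor₂ ≫ e₃.hom = e₂.hom ≫ T₂.mor₂) : T₁ ≅ T₂ :=
  (rotate C).preimageIso
    (isoTriangleOfIso₁₂ _ _ (rot_of_distTriang _ hT₁) (rot_of_distTriang _ hT₂) e₂ e₃ comm)

variable [HasBinaryBiproducts C]

lemma biprodTriangle_distinguished {T₁ T₂ : Triangle C} (hT₁ : T₁ ∈ distTriang C)
    (hT₂ : T₂ ∈ distTriang C) : biprodTriangle T₁ T₂ ∈ distTriang C := by
  have : HasFiniteProducts C := hasFiniteProducts_of_has_binary_and_terminal
  let T : WalkingPair → Triangle C := fun j => WalkingPair.casesOn j T₁ T₂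
  refine isomorphic_distinguished _
    (productTriangle_distinguished T (by rintro (_ | _); exacts [hT₁, hT₂])) _ ?_
  refine Triangle.isoMk _ _ (biprod.isoPi fun j => (T j).obj₁)
    (biprod.isoPi fun j => (T j).obj₂) (biprod.isoPi fun j => (T j).obj₃) ?_ ?_ ?_
  all_goals dsimp only [biprodTriangle, productTriangle, Triangle.mk]
  · ext (_ | _) : 1 <;> simp [biprod.isoPi, T]
  · ext (_ | _) : 1 <;> simp [biprod.isoPi, T]
  · rw [← cancel_mono (piComparison _ _)]
    ext (_ | _) <;> simp [biprod.isoPi, T, ← Functor.map_comp]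

lemma biprod_contractibleTriangle_distinguished {X Y Z : C} {f : X ⟶ Y} {g : Y ⟶ Z}
    {h : Z ⟶ X⟦(1 : ℤ)⟧} (hT : Triangle.mk f g h ∈ distTriang C) (W : C) :
    Triangle.mk (biprod.map f (𝟙 W)) (biprod.desc g 0)
      (h ≫ (biprod.inl : X ⟶ X ⊞ W)⟦(1 : ℤ)⟧') ∈ distTriang C := by
  have hsum := biprodTriangle_distinguished hT (contractible_distinguished W)
  -- `simp` cannot see through the projections `(Triangle.mk f g h).obj₁`, …, so restate with `X`, …
  change Triangle.mk (biprod.map f (𝟙 W)) (biprod.map g (0 : W ⟶ 0))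
    (biprod.desc (h ≫ biprod.inl⟦(1 : ℤ)⟧') (0 ≫ biprod.inr⟦(1 : ℤ)⟧')) ∈ distTriang C at hsum
  refine isomorphic_distinguished _ hsum _
    (Triangle.isoMk _ _ (Iso.refl _) (Iso.refl _) (isoBiprodZero (isZero_zero C)) ?_ ?_ ?_)
  all_goals dsimp only [Triangle.mk]
  · simp
  · ext <;> simp
  · simp

end CategoryTheory.Pretriangulated

/-- If `N → L₁ ⊞ L₂ →g M → N⟦1⟧` is a distinguished triangle whose
component `g₂ = ι₂ ≫ g : L₂ ⟶ M` is zero, then there is a distinguished triangle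
`N′ →f′ L₁ → M →h′ N′⟦1⟧` such that the given triangle is isomorphic to the direct sum
of this triangle with the contractible triangle `L₂ → L₂ → 0 → L₂⟦1⟧`;
in particular `N ≅ N′ ⊞ L₂`. -/
theorem stmt1 {C : Type*} [Category C] [Preadditive C] [HasZeroObject C]
    [HasShift C ℤ] [∀ n : ℤ, (shiftFunctor C n).Additive] [Pretriangulated C]
    [HasBinaryBiproducts C]
    (N L₁ L₂ M : C) (f : N ⟶ L₁ ⊞ L₂) (g : L₁ ⊞ L₂ ⟶ M) (h : M ⟶ N⟦(1 : ℤ)⟧)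
    (hT : Triangle.mk f g h ∈ distTriang C)
    (hg : biprod.inr ≫ g = 0) :
    ∃ (N' : C) (f' : N' ⟶ L₁) (h' : M ⟶ N'⟦(1 : ℤ)⟧),
      (Triangle.mk f' (biprod.inl ≫ g) h' ∈ distTriang C) ∧
      Nonempty ((Triangle.mk f g h : Triangle C) ≅
        Triangle.mk (biprod.map f' (𝟙 L₂)) (biprod.desc (biprod.inl ≫ g) 0)
          (h' ≫ (biprod.inl : N' ⟶ N' ⊞ L₂)⟦(1 : ℤ)⟧')) ∧
      Nonempty (N ≅ N' ⊞ L₂) := by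
  obtain ⟨N', f', h', hT'⟩ := distinguished_cocone_triangle₁ (biprod.inl ≫ g)
  have hdesc : biprod.desc (biprod.inl ≫ g) 0 = g := by ext <;> simp [hg]
  let e := isoTriangleOfIso₂₃ _ _ hT (biprod_contractibleTriangle_distinguished hT' L₂)
    (Iso.refl _) (Iso.refl _) (by dsimp only [Triangle.mk]; simp [hdesc])
  exact ⟨N', f', h', hT', ⟨e⟩, ⟨Triangle.π₁.mapIso e⟩⟩
end

section
/- Let X →u Y →v Z →w X⟦1⟧ be a distinguished triangle in C and let M be an object of C. If there exists a morphism g : X → M with w ≫ g⟦1⟧ ≠ 0 (where g⟦1⟧ : X⟦1⟧ → M⟦1⟧ is the shift of g), then the strict inequality dim_k Hom(Y, M⟦1⟧) < dim_k Hom(X, M⟦1⟧) + dim_k Hom(Z, M⟦1⟧) holds. -/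
open CategoryTheory CategoryTheory.Limits CategoryTheory.Pretriangulated

/-! Applying `Hom(-, M⟦1⟧)` to the triangle gives a sequence
`Hom(Z, M⟦1⟧) → Hom(Y, M⟦1⟧) → Hom(X, M⟦1⟧)` that is exact in the middle, so by rank–nullity
`dim Hom(Y, M⟦1⟧) ≤ dim Hom(X, M⟦1⟧) + dim Hom(Z, M⟦1⟧) - dim ker(v^*)`.
The morphism `w ≫ g⟦1⟧` is a nonzero element of `ker(v^*)`, which makes the inequality strict. -/

theorem LinearMap.finrank_lt_add_of_ker_le_range {K M N P : Type*} [DivisionRing K]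
    [AddCommGroup M] [Module K M] [AddCommGroup N] [Module K N] [AddCommGroup P] [Module K P]
    [FiniteDimensional K M] [FiniteDimensional K N] [FiniteDimensional K P]
    (f : N →ₗ[K] P) (g : M →ₗ[K] N) (hfg : LinearMap.ker f ≤ LinearMap.range g)
    (hg : LinearMap.ker g ≠ ⊥) :
    Module.finrank K N < Module.finrank K P + Module.finrank K M := by
  have rank_nullity_f := LinearMap.finrank_range_add_finrank_ker f
  have rank_nullity_g := LinearMap.finrank_range_add_finrank_ker g
  have ker_f_le : Module.finrank K (LinearMap.ker f) ≤ Module.finrank K (LinearMap.range g) :=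
    Submodule.finrank_mono hfg
  have range_f_le : Module.finrank K (LinearMap.range f) ≤ Module.finrank K P :=
    (LinearMap.range f).finrank_le
  have ker_g_pos : 0 < Module.finrank K (LinearMap.ker g) :=
    Module.finrank_pos_iff.mpr (Submodule.nontrivial_iff_ne_bot.mpr hg)
  omega

section

-- `shiftFunctor` is qualified because these binders are re-elaborated inside the `Triangle`
-- namespace of the lemmas below, where it would mean `Triangle.shiftFunctor`.
variable (k : Type*) [Semiring k] {C : Type*} [Category C] [Preadditive C] [HasZeroObject C]
  [HasShift C ℤ] [∀ n : ℤ, (CategoryTheory.shiftFunctor C n).Additive] [Pretriangulated C]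
  [Linear k C] {T : Triangle C}

theorem CategoryTheory.Pretriangulated.Triangle.ker_leftComp_mor₁_le_range_leftComp_mor₂
    (hT : T ∈ distTriang C) (A : C) :
    LinearMap.ker (Linear.leftComp k A T.mor₁) ≤ LinearMap.range (Linear.leftComp k A T.mor₂) := by
  intro f hf
  obtain ⟨h, rfl⟩ := Triangle.yoneda_exact₂ T hT f hf
  exact ⟨h, rfl⟩

theorem CategoryTheory.Pretriangulated.Triangle.mor₃_comp_mem_ker_leftComp_mor₂
    (hT : T ∈ distTriang C) {A : C} (h : T.obj₁⟦(1 : ℤ)⟧ ⟶ A) :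
    T.mor₃ ≫ h ∈ LinearMap.ker (Linear.leftComp k A T.mor₂) := by
  simp [reassoc_of% comp_distTriang_mor_zero₂₃ T hT]

end

/-- For a distinguished triangle `X →u Y →v Z →w X⟦1⟧` and an object `M`,
if there is `g : X ⟶ M` with `w ≫ g⟦1⟧' ≠ 0`, then
`dim Hom(Y, M⟦1⟧) < dim Hom(X, M⟦1⟧) + dim Hom(Z, M⟦1⟧)`. -/
theorem stmt5 {k : Type*} [Field k] {C : Type*} [Category C] [Preadditive C]
    [CategoryTheory.Linear k C] [HasZeroObject C] [HasShift C ℤ]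
    [∀ n : ℤ, (shiftFunctor C n).Additive] [Pretriangulated C]
    [∀ X Y : C, FiniteDimensional k (X ⟶ Y)]
    (X Y Z : C) (u : X ⟶ Y) (v : Y ⟶ Z) (w : Z ⟶ X⟦(1 : ℤ)⟧)
    (hT : Triangle.mk u v w ∈ distTriang C) (M : C)
    (g : X ⟶ M) (hg : w ≫ g⟦(1 : ℤ)⟧' ≠ 0) :
    Module.finrank k (Y ⟶ M⟦(1 : ℤ)⟧) <
      Module.finrank k (X ⟶ M⟦(1 : ℤ)⟧) + Module.finrank k (Z ⟶ M⟦(1 : ℤ)⟧) := by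
  refine LinearMap.finrank_lt_add_of_ker_le_range _ _
    (Triangle.ker_leftComp_mor₁_le_range_leftComp_mor₂ k hT _) ?_
  exact (Submodule.ne_bot_iff _).mpr
    ⟨_, Triangle.mor₃_comp_mem_ker_leftComp_mor₂ k hT (g⟦(1 : ℤ)⟧'), hg⟩
end

section
/- Let X →u Y →v Z →w X⟦1⟧ be a distinguished triangle in C. Then dim_k Hom(Y, Y⟦1⟧) ≤ dim_k Hom(X ⊕ Z, (X ⊕ Z)⟦1⟧); equivalently, dim_k Hom(Y, Y⟦1⟧) ≤ dim_k Hom(X, X⟦1⟧) + dim_k Hom(X, Z⟦1⟧) + dim_k Hom(Z, X⟦1⟧) + dim_k Hom(Z, Z⟦1⟧). -/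
/-!
The Hom-functors `Hom(-, W)` and `Hom(W, -)` send a distinguished triangle `X → Y → Z → X⟦1⟧`
to sequences exact at the middle term, so `dim Hom(Y, W) ≤ dim Hom(X, W) + dim Hom(Z, W)` and
likewise covariantly. Bounding `dim Hom(Y, Y⟦1⟧)` first in the source and then (using the shifted
triangle) in the target gives the four-term bound, which is `dim Hom(X ⊞ Z, (X ⊞ Z)⟦1⟧)` because
Hom-spaces split over biproducts and the shift preserves them.
-/

open CategoryTheory CategoryTheory.Limits CategoryTheory.Pretriangulated

lemma LinearMap.finrank_le_add_of_ker_le_range {k A B C : Type*} [Field k]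
    [AddCommGroup A] [Module k A] [AddCommGroup B] [Module k B]
    [AddCommGroup C] [Module k C] [FiniteDimensional k A]
    [FiniteDimensional k B] [FiniteDimensional k C]
    (f : A →ₗ[k] B) (g : B →ₗ[k] C) (h : LinearMap.ker g ≤ LinearMap.range f) :
    Module.finrank k B ≤ Module.finrank k A + Module.finrank k C := by
  have hker : Module.finrank k (LinearMap.ker g) ≤ Module.finrank k A :=
    (Submodule.finrank_mono h).trans (LinearMap.finrank_range_le f)
  have hrange : Module.finrank k (LinearMap.range g) ≤ Module.finrank k C :=
    (LinearMap.range g).finrank_le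
  have := LinearMap.finrank_range_add_finrank_ker g
  omega

section Biproduct

variable (R : Type*) [Semiring R] {C : Type*} [Category C] [Preadditive C] [Linear R C]
  [HasBinaryBiproducts C]

noncomputable def biprodDescLinearEquiv (X Z W : C) :
    ((X ⟶ W) × (Z ⟶ W)) ≃ₗ[R] (X ⊞ Z ⟶ W) where
  toFun p := biprod.desc p.1 p.2
  map_add' p q := by ext <;> simp
  map_smul' r p := by ext <;> simp
  invFun f := (biprod.inl ≫ f, biprod.inr ≫ f)
  left_inv p := by simp
  right_inv f := by ext <;> simp

noncomputable def biprodLiftLinearEquiv (W X Z : C) :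
    ((W ⟶ X) × (W ⟶ Z)) ≃ₗ[R] (W ⟶ X ⊞ Z) where
  toFun p := biprod.lift p.1 p.2
  map_add' p q := by ext <;> simp
  map_smul' r p := by ext <;> simp
  invFun f := (f ≫ biprod.fst, f ≫ biprod.snd)
  left_inv p := by simp
  right_inv f := by ext <;> simp

end Biproduct

section FiniteDimensionalHom

variable {k : Type*} [Field k] {C : Type*} [Category C] [Preadditive C] [Linear k C]
  [∀ X Y : C, FiniteDimensional k (X ⟶ Y)]

lemma finrank_biprod_hom [HasBinaryBiproducts C] (X Z W : C) :
    Module.finrank k (X ⊞ Z ⟶ W) = Module.finrank k (X ⟶ W) + Module.finrank k (Z ⟶ W) := by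
  rw [← (biprodDescLinearEquiv k X Z W).finrank_eq, Module.finrank_prod]

lemma finrank_hom_biprod [HasBinaryBiproducts C] (W X Z : C) :
    Module.finrank k (W ⟶ X ⊞ Z) = Module.finrank k (W ⟶ X) + Module.finrank k (W ⟶ Z) := by
  rw [← (biprodLiftLinearEquiv k W X Z).finrank_eq, Module.finrank_prod]

variable [HasZeroObject C] [HasShift C ℤ] [∀ n : ℤ, (shiftFunctor C n).Additive]
  [Pretriangulated C] {T : Triangle C}

lemma finrank_obj₂_hom_le_of_distinguished (hT : T ∈ distTriang C) (W : C) :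
    Module.finrank k (T.obj₂ ⟶ W) ≤
      Module.finrank k (T.obj₁ ⟶ W) + Module.finrank k (T.obj₃ ⟶ W) := by
  refine (LinearMap.finrank_le_add_of_ker_le_range (Linear.leftComp k W T.mor₂)
    (Linear.leftComp k W T.mor₁) fun f hf => ?_).trans_eq (add_comm _ _)
  obtain ⟨g, rfl⟩ := Triangle.yoneda_exact₂ T hT f hf
  exact ⟨g, rfl⟩

lemma finrank_hom_obj₂_le_of_distinguished (hT : T ∈ distTriang C) (W : C) :
    Module.finrank k (W ⟶ T.obj₂) ≤
      Module.finrank k (W ⟶ T.obj₁) + Module.finrank k (W ⟶ T.obj₃) := by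
  refine LinearMap.finrank_le_add_of_ker_le_range (Linear.rightComp k W T.mor₁)
    (Linear.rightComp k W T.mor₂) fun f hf => ?_
  obtain ⟨g, rfl⟩ := Triangle.coyoneda_exact₂ T hT f hf
  exact ⟨g, rfl⟩

end FiniteDimensionalHom

/-- For a distinguished triangle `X →u Y →v Z →w X⟦1⟧`,
`dim Hom(Y, Y⟦1⟧) ≤ dim Hom(X ⊞ Z, (X ⊞ Z)⟦1⟧)`; equivalently,
`dim Hom(Y, Y⟦1⟧) ≤ dim Hom(X, X⟦1⟧) + dim Hom(X, Z⟦1⟧) + dim Hom(Z, X⟦1⟧)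
  + dim Hom(Z, Z⟦1⟧)`. -/
theorem stmt6 {k : Type*} [Field k] {C : Type*} [Category C] [Preadditive C]
    [CategoryTheory.Linear k C] [HasZeroObject C] [HasShift C ℤ]
    [∀ n : ℤ, (shiftFunctor C n).Additive] [Pretriangulated C]
    [HasBinaryBiproducts C]
    [∀ X Y : C, FiniteDimensional k (X ⟶ Y)]
    (X Y Z : C) (u : X ⟶ Y) (v : Y ⟶ Z) (w : Z ⟶ X⟦(1 : ℤ)⟧)
    (hT : Triangle.mk u v w ∈ distTriang C) :
    Module.finrank k (Y ⟶ Y⟦(1 : ℤ)⟧) ≤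
        Module.finrank k (X ⊞ Z ⟶ (X ⊞ Z)⟦(1 : ℤ)⟧) ∧
    Module.finrank k (Y ⟶ Y⟦(1 : ℤ)⟧) ≤
        Module.finrank k (X ⟶ X⟦(1 : ℤ)⟧) + Module.finrank k (X ⟶ Z⟦(1 : ℤ)⟧) +
        Module.finrank k (Z ⟶ X⟦(1 : ℤ)⟧) + Module.finrank k (Z ⟶ Z⟦(1 : ℤ)⟧) := by
  have hY : Module.finrank k (Y ⟶ Y⟦(1 : ℤ)⟧) ≤
      Module.finrank k (X ⟶ Y⟦(1 : ℤ)⟧) + Module.finrank k (Z ⟶ Y⟦(1 : ℤ)⟧) :=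
    finrank_obj₂_hom_le_of_distinguished hT _
  have hT₁ := Triangle.shift_distinguished _ hT 1
  have hX : Module.finrank k (X ⟶ Y⟦(1 : ℤ)⟧) ≤
      Module.finrank k (X ⟶ X⟦(1 : ℤ)⟧) + Module.finrank k (X ⟶ Z⟦(1 : ℤ)⟧) :=
    finrank_hom_obj₂_le_of_distinguished hT₁ X
  have hZ : Module.finrank k (Z ⟶ Y⟦(1 : ℤ)⟧) ≤
      Module.finrank k (Z ⟶ X⟦(1 : ℤ)⟧) + Module.finrank k (Z ⟶ Z⟦(1 : ℤ)⟧) :=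
    finrank_hom_obj₂_le_of_distinguished hT₁ Z
  have : PreservesBinaryBiproducts (shiftFunctor C (1 : ℤ)) :=
    preservesBinaryBiproducts_of_preservesBiproducts _
  rw [(Linear.homCongr k (Iso.refl _) ((shiftFunctor C (1 : ℤ)).mapBiprod X Z)).finrank_eq,
    finrank_biprod_hom, finrank_hom_biprod, finrank_hom_biprod]
  omega
end

section
/- Let X →u Y →v Z →w X⟦1⟧ be a distinguished triangle in C. Then the following are equivalent: (i) dim_k Hom(Y, Y⟦1⟧) = dim_k Hom(X ⊕ Z, (X ⊕ Z)⟦1⟧); (ii) w = 0 (the triangle is split); (iii) Y ≅ X ⊕ Z. -/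
/-!
The long exact `Hom`-sequences of the triangle give
`dim Hom(Y, Y⟦1⟧) ≤ dim Hom(X, Y⟦1⟧) + dim Hom(Z, Y⟦1⟧)` and bound each summand by
`dim Hom(A, X⟦1⟧) + dim Hom(A, Z⟦1⟧)` for `A = X, Z`; these four terms add up to
`dim Hom(X ⊞ Z, (X ⊞ Z)⟦1⟧)`. So equality of the two dimensions forces
`Hom(Z, X⟦1⟧) → Hom(Z, Y⟦1⟧)` to be injective, and it kills `w` because
`w ≫ u⟦1⟧' = 0`.
Conversely, a triangle with `w = 0` splits.
-/

open CategoryTheory CategoryTheory.Limits CategoryTheory.Pretriangulated Module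

section LinearAlgebra

variable {k M N P : Type*} [Field k] [AddCommGroup M] [Module k M] [AddCommGroup N] [Module k N]
  [AddCommGroup P] [Module k P] [FiniteDimensional k M] [FiniteDimensional k N]
  [FiniteDimensional k P]

theorem Function.Exact.finrank_add_finrank_ker_le {f : M →ₗ[k] N} {g : N →ₗ[k] P}
    (h : Function.Exact f g) :
    finrank k N + finrank k (LinearMap.ker f) ≤ finrank k M + finrank k P := by
  have hg := LinearMap.finrank_range_add_finrank_ker g
  have hf := LinearMap.finrank_range_add_finrank_ker f
  have hrange := Submodule.finrank_le (LinearMap.range g)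
  rw [h.linearMap_ker_eq] at hg
  omega

end LinearAlgebra

section Biproduct

variable (k : Type*) [Field k] {C : Type*} [Category C] [Preadditive C] [Linear k C]
  [HasBinaryBiproducts C]

noncomputable def biprodHomLinearEquiv (P Q B : C) :
    (P ⊞ Q ⟶ B) ≃ₗ[k] (P ⟶ B) × (Q ⟶ B) where
  toFun f := (biprod.inl ≫ f, biprod.inr ≫ f)
  invFun p := biprod.desc p.1 p.2
  map_add' f g := by simp
  map_smul' r f := by simp
  left_inv f := by ext <;> simp
  right_inv p := by simp

noncomputable def homBiprodLinearEquiv (A P Q : C) :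
    (A ⟶ P ⊞ Q) ≃ₗ[k] (A ⟶ P) × (A ⟶ Q) where
  toFun f := (f ≫ biprod.fst, f ≫ biprod.snd)
  invFun p := biprod.lift p.1 p.2
  map_add' f g := by simp
  map_smul' r f := by simp
  left_inv f := by ext <;> simp
  right_inv p := by simp

theorem finrank_biprod_hom_biprod (P Q R S : C) [FiniteDimensional k (P ⟶ R)]
    [FiniteDimensional k (P ⟶ S)] [FiniteDimensional k (Q ⟶ R)]
    [FiniteDimensional k (Q ⟶ S)] :
    finrank k (P ⊞ Q ⟶ R ⊞ S) =
      finrank k (P ⟶ R) + finrank k (P ⟶ S) + (finrank k (Q ⟶ R) + finrank k (Q ⟶ S)) := by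
  rw [((biprodHomLinearEquiv k P Q _).trans ((homBiprodLinearEquiv k P R S).prodCongr
    (homBiprodLinearEquiv k Q R S))).finrank_eq, finrank_prod, finrank_prod, finrank_prod]

end Biproduct

namespace CategoryTheory.Pretriangulated.Triangle

variable {k : Type*} [Field k] {C : Type*} [Category C] [Preadditive C] [Linear k C]
  [HasZeroObject C] [HasShift C ℤ] [∀ n : ℤ, (CategoryTheory.shiftFunctor C n).Additive]
  [Pretriangulated C] {T : Triangle C}

theorem exact_leftComp_mor₂_mor₁ (hT : T ∈ distTriang C) (B : C) :
    Function.Exact (Linear.leftComp k B T.mor₂) (Linear.leftComp k B T.mor₁) := by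
  intro f
  refine ⟨fun hf ↦ ?_, ?_⟩
  · obtain ⟨g, rfl⟩ := T.yoneda_exact₂ hT f hf
    exact ⟨g, rfl⟩
  · rintro ⟨g, rfl⟩
    simp [comp_distTriang_mor_zero₁₂_assoc _ hT]

theorem exact_rightComp_shift_mor₁_mor₂ (hT : T ∈ distTriang C) (A : C) :
    Function.Exact (Linear.rightComp k A (T.mor₁⟦(1 : ℤ)⟧'))
      (Linear.rightComp k A (T.mor₂⟦(1 : ℤ)⟧')) := by
  intro f
  refine ⟨fun hf ↦ ?_, ?_⟩
  · obtain ⟨g, rfl⟩ := T.rotate.coyoneda_exact₁ (rot_of_distTriang T hT) f hf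
    exact ⟨-g, (Preadditive.neg_comp _ _).trans (Preadditive.comp_neg _ _).symm⟩
  · rintro ⟨g, rfl⟩
    simp [← Functor.map_comp, comp_distTriang_mor_zero₁₂ _ hT]

variable [HasBinaryBiproducts C] [∀ X Y : C, FiniteDimensional k (X ⟶ Y)]

theorem mor₃_eq_zero_of_finrank_eq (hT : T ∈ distTriang C)
    (h : finrank k (T.obj₂ ⟶ T.obj₂⟦(1 : ℤ)⟧) =
      finrank k (T.obj₁ ⊞ T.obj₃ ⟶ (T.obj₁ ⊞ T.obj₃)⟦(1 : ℤ)⟧)) :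
    T.mor₃ = 0 := by
  have hY :=
    (exact_leftComp_mor₂_mor₁ (k := k) hT (T.obj₂⟦(1 : ℤ)⟧)).finrank_add_finrank_ker_le
  have hX := (exact_rightComp_shift_mor₁_mor₂ (k := k) hT T.obj₁).finrank_add_finrank_ker_le
  have hZ := (exact_rightComp_shift_mor₁_mor₂ (k := k) hT T.obj₃).finrank_add_finrank_ker_le
  have := preservesBinaryBiproducts_of_preservesBiproducts (CategoryTheory.shiftFunctor C (1 : ℤ))
  rw [(Linear.homCongr k (Iso.refl _)
    ((CategoryTheory.shiftFunctor C (1 : ℤ)).mapBiprod _ _)).finrank_eq,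
    finrank_biprod_hom_biprod] at h
  have hker : LinearMap.ker (Linear.rightComp k T.obj₃ (T.mor₁⟦(1 : ℤ)⟧')) = ⊥ :=
    Submodule.finrank_eq_zero.mp (by omega)
  have hmem : T.mor₃ ∈ LinearMap.ker (Linear.rightComp k T.obj₃ (T.mor₁⟦(1 : ℤ)⟧')) :=
    comp_distTriang_mor_zero₃₁ T hT
  simpa [hker] using hmem

end CategoryTheory.Pretriangulated.Triangle

/-- For a distinguished triangle `X →u Y →v Z →w X⟦1⟧`, the following are
equivalent: (i) `dim Hom(Y, Y⟦1⟧) = dim Hom(X ⊞ Z, (X ⊞ Z)⟦1⟧)`; (ii) `w = 0`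
(the triangle is split); (iii) `Y ≅ X ⊞ Z`. -/
theorem stmt7 {k : Type*} [Field k] {C : Type*} [Category C] [Preadditive C]
    [CategoryTheory.Linear k C] [HasZeroObject C] [HasShift C ℤ]
    [∀ n : ℤ, (shiftFunctor C n).Additive] [Pretriangulated C]
    [HasBinaryBiproducts C]
    [∀ X Y : C, FiniteDimensional k (X ⟶ Y)]
    (X Y Z : C) (u : X ⟶ Y) (v : Y ⟶ Z) (w : Z ⟶ X⟦(1 : ℤ)⟧)
    (hT : Triangle.mk u v w ∈ distTriang C) :
    List.TFAE
      [Module.finrank k (Y ⟶ Y⟦(1 : ℤ)⟧) =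
          Module.finrank k (X ⊞ Z ⟶ (X ⊞ Z)⟦(1 : ℤ)⟧),
       w = 0,
       Nonempty (Y ≅ X ⊞ Z)] := by
  tfae_have 1 → 2 := Triangle.mor₃_eq_zero_of_finrank_eq hT
  tfae_have 2 → 3 := fun hw ↦ ⟨(exists_iso_binaryBiproduct_of_distTriang _ hT hw).choose⟩
  tfae_have 3 → 1 := fun ⟨e⟩ ↦
    (Linear.homCongr k e ((shiftFunctor C (1 : ℤ)).mapIso e)).finrank_eq
  tfae_finish
end

section
/- Let k be a finite field, A a finite-dimensional k-algebra, and let M and N be finite-dimensional A-modules having no common direct summand, i.e. no nonzero A-module is isomorphic both to a direct summand of M and to a direct summand of N. Then the (finite) cardinalities satisfy |Aut_A(M ⊕ N)| = |Aut_A(M)| · |Aut_A(N)| · |Hom_A(M, N)| · |Hom_A(N, M)|, where Aut_A denotes the group of A-module automorphisms and Hom_A the space of A-module homomorphisms. -/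
/-!
Write an automorphism `φ` of `M × N` as a block matrix `[[a, b], [c, d]]`. If its corner
`d : N → N` is invertible, `φ` factors uniquely as the upper shear by `b d⁻¹` after the lower
triangular automorphism with diagonal `(a - b d⁻¹ c, d)` and lower-left block `c`; this is a
bijection `Aut M × Aut N × Hom(M, N) × Hom(N, M) ≃ Aut (M × N)`.

The corner is invertible because `d d' = 1 - c b'` and `d' d = 1 - c' b` (primes denoting the
blocks of `φ⁻¹`), and every composite `e : M → N → M`, hence every composite `N → M → N`, is
nilpotent: by Fitting's lemma, for large `n` the range of `eⁿ` is a direct summand of `M` on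
which `e` is invertible, and since `e` factors through `N` it is a direct summand of `N` as well,
hence zero.
-/

universe u

open Function LinearMap

section Nilpotent

variable {A : Type*} [Ring A] {M N P : Type*} [AddCommGroup M] [Module A M]
  [AddCommGroup N] [Module A N] [AddCommGroup P] [Module A P]

theorem LinearMap.exists_retraction_of_bijective_comp (i : P →ₗ[A] N) (w : N →ₗ[A] P)
    (h : Bijective (w ∘ₗ i)) : ∃ (i : P →ₗ[A] N) (r : N →ₗ[A] P), r ∘ₗ i = LinearMap.id :=
  ⟨i, (LinearEquiv.ofBijective _ h).symm.toLinearMap ∘ₗ w,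
    LinearMap.ext fun x ↦ LinearEquiv.ofBijective_symm_apply_apply _ (h := h) x⟩

theorem LinearMap.bijective_projectionOnto_comp_comp_subtype (E : Module.End A M)
    (h : IsCompl (range E) (ker E)) :
    Bijective ((range E).projectionOnto (ker E) h ∘ₗ E ∘ₗ (range E).subtype) := by
  have hπ (x : M) : (range E).projectionOnto (ker E) h (E x) = ⟨E x, mem_range_self E x⟩ :=
    Submodule.projectionOnto_apply_of_mem_left h _
  constructor
  · refine (injective_iff_map_eq_zero _).mpr fun x hx ↦ ?_
    have hEx : E x = 0 := by simpa [hπ] using hx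
    exact Subtype.ext (Submodule.disjoint_def.mp h.disjoint _ x.2 hEx)
  · rintro ⟨_, y, rfl⟩
    refine ⟨(range E).projectionOnto (ker E) h y, Subtype.ext ?_⟩
    have hy := Submodule.projection_add_projection_eq_self h y
    have hker := (ker E).projection_apply_mem h.symm y
    rw [comp_apply, comp_apply, hπ]
    simp only [Submodule.coe_subtype, Submodule.coe_projectionOnto_apply]
    conv_rhs => rw [← hy, map_add, mem_ker.mp hker, add_zero]

theorem LinearMap.comp_pow_succ (f : M →ₗ[A] N) (g : N →ₗ[A] M) (n : ℕ) :
    (f ∘ₗ g) ^ (n + 1) = f ∘ₗ ((g ∘ₗ f) ^ n) ∘ₗ g := by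
  induction n with
  | zero => rfl
  | succ n ih => rw [pow_succ, ih, pow_succ]; rfl

theorem IsNilpotent.comp_comm {f : M →ₗ[A] N} {g : N →ₗ[A] M}
    (h : IsNilpotent (g ∘ₗ f)) : IsNilpotent (f ∘ₗ g) := by
  obtain ⟨n, hn⟩ := h
  exact ⟨n + 1, by rw [comp_pow_succ, hn, zero_comp, comp_zero]⟩

end Nilpotent

theorem LinearMap.isNilpotent_comp_of_no_common_summand {A : Type*} [Ring A] {M : Type u}
    {N : Type*} [AddCommGroup M] [Module A M] [AddCommGroup N] [Module A N]
    [IsArtinian A M] [IsNoetherian A M]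
    (hcommon : ∀ (P : Type u) [AddCommGroup P] [Module A P],
      (∃ (i : P →ₗ[A] M) (r : M →ₗ[A] P), r ∘ₗ i = LinearMap.id) →
      (∃ (i : P →ₗ[A] N) (r : N →ₗ[A] P), r ∘ₗ i = LinearMap.id) →
      Subsingleton P)
    (f : M →ₗ[A] N) (g : N →ₗ[A] M) : IsNilpotent (g ∘ₗ f) := by
  set e := g ∘ₗ f
  obtain ⟨n, hn⟩ := Filter.eventually_atTop.mp e.eventually_isCompl_ker_pow_range_pow
  set E := e ^ (n + 1)
  have hE : IsCompl (range E) (ker E) := (hn (n + 1) n.le_succ).symm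
  set π := (range E).projectionOnto (ker E) hE
  have hfactor : (π ∘ₗ (e ^ n) ∘ₗ g) ∘ₗ f ∘ₗ (range E).subtype =
      π ∘ₗ E ∘ₗ (range E).subtype := by
    simp only [E, pow_succ, Module.End.mul_eq_comp, e, comp_assoc]
  have : Subsingleton (range E) := hcommon (range E)
    ⟨(range E).subtype, π, Submodule.projectionOnto_comp_subtype hE⟩
    (exists_retraction_of_bijective_comp _ _
      (by rw [hfactor]; exact E.bijective_projectionOnto_comp_comp_subtype hE))
  exact ⟨n + 1, range_eq_bot.mp Submodule.eq_bot_of_subsingleton⟩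

section Blocks

variable {R M N : Type*} [Ring R] [AddCommGroup M] [AddCommGroup N] [Module R M] [Module R N]

theorem LinearEquiv.snd_apply_snd_symm_apply (φ : (M × N) ≃ₗ[R] (M × N)) (y : N) :
    (φ (0, (φ.symm (0, y)).2)).2 = y - (φ ((φ.symm (0, y)).1, 0)).2 := by
  set p := φ.symm (0, y)
  have h : φ ((p.1, 0) + (0, p.2)) = (0, y) := by simp [p]
  rw [map_add] at h
  rw [eq_sub_iff_add_eq', ← Prod.snd_add, h]

theorem LinearEquiv.bijective_snd_apply_zero_mk
    (hnil : ∀ (f : M →ₗ[R] N) (g : N →ₗ[R] M), IsNilpotent (f ∘ₗ g))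
    (φ : (M × N) ≃ₗ[R] (M × N)) : Bijective fun y ↦ (φ (0, y)).2 := by
  let d (ψ : (M × N) ≃ₗ[R] (M × N)) := snd R M N ∘ₗ ψ.toLinearMap ∘ₗ inr R M N
  have hunit (ψ : (M × N) ≃ₗ[R] (M × N)) : Bijective (d ψ ∘ₗ d ψ.symm) := by
    have : d ψ ∘ₗ d ψ.symm = 1 - (snd R M N ∘ₗ ψ.toLinearMap ∘ₗ inl R M N) ∘ₗ
        (fst R M N ∘ₗ ψ.symm.toLinearMap ∘ₗ inr R M N) :=
      LinearMap.ext ψ.snd_apply_snd_symm_apply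
    rw [← Module.End.isUnit_iff, this]
    exact (hnil _ _).isUnit_one_sub
  have hinj := hunit φ.symm
  have hsurj := hunit φ
  rw [coe_comp] at hinj hsurj
  exact ⟨hinj.injective.of_comp, hsurj.surjective.of_comp⟩

def LinearEquiv.upperShear (g : N →ₗ[R] M) : (M × N) ≃ₗ[R] (M × N) :=
  prodComm R M N ≪≫ₗ (refl R N).skewProd (refl R M) g ≪≫ₗ prodComm R N M

@[simp]
theorem LinearEquiv.upperShear_apply (g : N →ₗ[R] M) (p : M × N) :
    upperShear g p = (p.1 + g p.2, p.2) :=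
  rfl

@[simp]
theorem LinearEquiv.upperShear_symm_apply (g : N →ₗ[R] M) (p : M × N) :
    (upperShear g).symm p = (p.1 - g p.2, p.2) :=
  rfl

def prodAutOfBlocks (p : ((M ≃ₗ[R] M) × (N ≃ₗ[R] N)) × ((M →ₗ[R] N) × (N →ₗ[R] M))) :
    (M × N) ≃ₗ[R] (M × N) :=
  p.1.1.skewProd p.1.2 p.2.1 ≪≫ₗ LinearEquiv.upperShear p.2.2

theorem prodAutOfBlocks_apply (α : M ≃ₗ[R] M) (β : N ≃ₗ[R] N) (f : M →ₗ[R] N)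
    (g : N →ₗ[R] M) (x : M) (y : N) :
    prodAutOfBlocks ((α, β), (f, g)) (x, y) = (α x + g (β y + f x), β y + f x) :=
  rfl

theorem prodAutOfBlocks_injective : Injective (prodAutOfBlocks (R := R) (M := M) (N := N)) := by
  rintro ⟨⟨α, β⟩, f, g⟩ ⟨⟨α', β'⟩, f', g'⟩ h
  have hx x := LinearEquiv.congr_fun h (x, 0)
  have hy y := LinearEquiv.congr_fun h (0, y)
  simp only [prodAutOfBlocks_apply, map_zero, add_zero, zero_add, Prod.mk.injEq] at hx hy
  obtain rfl : β = β' := LinearEquiv.ext fun y ↦ (hy y).2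
  obtain rfl : f = f' := LinearMap.ext fun x ↦ (hx x).2
  obtain rfl : g = g' := LinearMap.ext fun y ↦ by simpa using (hy (β.symm y)).1
  obtain rfl : α = α' := LinearEquiv.ext fun x ↦ by simpa using (hx x).1
  rfl

theorem prodAutOfBlocks_surjective
    (hd : ∀ φ : (M × N) ≃ₗ[R] (M × N), Bijective fun y ↦ (φ (0, y)).2) :
    Surjective (prodAutOfBlocks (R := R) (M := M) (N := N)) := by
  intro φ
  let β := LinearEquiv.ofBijective (snd R M N ∘ₗ φ.toLinearMap ∘ₗ inr R M N) (hd φ)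
  let c := snd R M N ∘ₗ φ.toLinearMap ∘ₗ inl R M N
  let g := fst R M N ∘ₗ φ.toLinearMap ∘ₗ inr R M N ∘ₗ β.symm.toLinearMap
  let L := (LinearEquiv.refl R M).skewProd β c
  -- `E` is `φ` with both off-diagonal blocks cleared; its `M`-block is the Schur complement `α₀`.
  let α₀ := fst R M N ∘ₗ φ.toLinearMap ∘ₗ inl R M N - g ∘ₗ c
  let E := L.symm ≪≫ₗ φ ≪≫ₗ (LinearEquiv.upperShear g).symm
  have hφβ (z : N) : φ (0, β.symm z) = (g z, z) :=
    Prod.ext rfl (β.apply_symm_apply z)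
  have hE (x : M) (y : N) : E (x, y) = (α₀ x, y) := by
    have hsplit : (x, β.symm (y - c x)) = ((x, 0) + (0, β.symm y) - (0, β.symm (c x)) : M × N) :=
      by simp
    have hφx : φ (x, 0) = (fst R M N (φ (x, 0)), c x) := rfl
    simp only [E, L, LinearEquiv.trans_apply, LinearEquiv.skewProd_symm_apply,
      LinearEquiv.refl_symm, LinearEquiv.refl_apply]
    rw [hsplit, map_sub, map_add, hφβ, hφβ, hφx, LinearEquiv.upperShear_symm_apply]
    ext <;> simp [α₀]
    abel
  have hα₀ : Bijective α₀ := by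
    have : (E : M × N → M × N) = Prod.map α₀ id := funext fun p ↦ hE p.1 p.2
    exact (Prod.map_bijective.mp (this ▸ E.bijective)).1
  refine ⟨((LinearEquiv.ofBijective α₀ hα₀, β), (c, g)), ?_⟩
  have hL : L ≪≫ₗ E = (LinearEquiv.ofBijective α₀ hα₀).skewProd β c := by
    ext ⟨x, y⟩ <;> simp [L, hE]
  calc prodAutOfBlocks _ = (L ≪≫ₗ E) ≪≫ₗ LinearEquiv.upperShear g := by rw [hL]; rfl
    _ = φ := LinearEquiv.ext fun p ↦ by
        simp only [E, LinearEquiv.trans_apply, LinearEquiv.symm_apply_apply,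
          LinearEquiv.apply_symm_apply]

end Blocks

theorem stmt12_general {k : Type*} [Field k]
    {A : Type*} [Ring A] [Algebra k A]
    {M N : Type u}
    [AddCommGroup M] [Module A M] [Module k M] [IsScalarTower k A M] [FiniteDimensional k M]
    [AddCommGroup N] [Module A N]
    (hcommon : ∀ (P : Type u) [AddCommGroup P] [Module A P],
      (∃ (i : P →ₗ[A] M) (r : M →ₗ[A] P), r ∘ₗ i = LinearMap.id) →
      (∃ (i : P →ₗ[A] N) (r : N →ₗ[A] P), r ∘ₗ i = LinearMap.id) →
      Subsingleton P) :
    Nat.card ((M × N) ≃ₗ[A] (M × N)) =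
      Nat.card (M ≃ₗ[A] M) * Nat.card (N ≃ₗ[A] N) *
        (Nat.card (M →ₗ[A] N) * Nat.card (N →ₗ[A] M)) := by
  have : IsNoetherian A M := isNoetherian_of_tower k inferInstance
  have : IsArtinian A M := isArtinian_of_tower k inferInstance
  have hcorner := LinearEquiv.bijective_snd_apply_zero_mk fun f g ↦
    (isNilpotent_comp_of_no_common_summand hcommon f g).comp_comm
  rw [← Nat.card_congr (Equiv.ofBijective _
      ⟨prodAutOfBlocks_injective, prodAutOfBlocks_surjective hcorner⟩),
    Nat.card_prod, Nat.card_prod, Nat.card_prod]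

/-- Let `k` be a finite field, `A` a finite-dimensional `k`-algebra, and let
`M`, `N` be finite-dimensional `A`-modules with no common direct summand (every `A`-module
that is a direct summand of both `M` and `N` is zero). Then
`|Aut_A(M ⊕ N)| = |Aut_A M| * |Aut_A N| * |Hom_A(M, N)| * |Hom_A(N, M)|`. -/
theorem stmt12 {k : Type*} [Field k] [Fintype k]
    {A : Type*} [Ring A] [Algebra k A] [FiniteDimensional k A]
    {M N : Type u}
    [AddCommGroup M] [Module A M] [Module k M] [IsScalarTower k A M] [FiniteDimensional k M]
    [AddCommGroup N] [Module A N] [Module k N] [IsScalarTower k A N] [FiniteDimensional k N]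
    (hcommon : ∀ (P : Type u) [AddCommGroup P] [Module A P],
      (∃ (i : P →ₗ[A] M) (r : M →ₗ[A] P), r ∘ₗ i = LinearMap.id) →
      (∃ (i : P →ₗ[A] N) (r : N →ₗ[A] P), r ∘ₗ i = LinearMap.id) →
      Subsingleton P) :
    Nat.card ((M × N) ≃ₗ[A] (M × N)) =
      Nat.card (M ≃ₗ[A] M) * Nat.card (N ≃ₗ[A] N) *
        (Nat.card (M →ₗ[A] N) * Nat.card (N →ₗ[A] M)) :=
  stmt12_general (k := k) hcommon
end
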